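/- arXiv:2306.06906 — 7 statements merged into one kernel-verified Lean document; each statement's English description precedes it below -/
import Mathlib

section
/- Let V be an n-dimensional real inner product space and S a complex Hermitian Clifford module over V with skew-adjoint Clifford multiplication. If α is a real 2-form on V satisfying α ∧ α = 0, then c(α)² = -|α|² · id on S, where c(α) = Σ_{i<j} α(e_i,e_j)c(e_i)c(e_j) and |α| is the norm induced by the inner product on Λ²(V*). Consequently |c(α)φ| = |α|·|φ| for every φ ∈ S. -/
/-!
Coordinatewise, `α ∧ α = 0` says `α_ab α_pq - α_ap α_bq + α_aq α_bp = 0` (the Plücker relations),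
which forces `α = u ∧ v`: take `u = α_a· / α_ab`, `v = α_b·` for any nonzero entry `α_ab`.
Then `c(α) = c(u) c(v) + ⟨u, v⟩`, and the Clifford relations give
`c(α)² = ⟨u, v⟩² - |u|² |v|²`, which is `-|α|²` by Lagrange's identity.
Finally `c(α)` is skew-adjoint, so `|c(α) φ|² = -⟨φ, c(α)² φ⟩ = |α|² |φ|²`.
-/

open Finset

theorem Finset.sum_sum_eq_sum_lt_add_sum_diag {ι M : Type*} [Fintype ι] [LinearOrder ι]
    [AddCommMonoid M] (f : ι → ι → M) :
    ∑ i, ∑ j, f i j =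
      ∑ p ∈ univ.filter (fun p : ι × ι => p.1 < p.2), (f p.1 p.2 + f p.2 p.1) + ∑ i, f i i := by
  have hsplit : ∀ i j, f i j = ((if i < j then f i j else 0) + if j < i then f i j else 0)
      + if i = j then f i j else 0 := by
    intro i j
    rcases lt_trichotomy i j with h | rfl | h
    · simp [h, h.not_gt, h.ne]
    · simp
    · simp [h, h.not_gt, h.ne']
  have hlower : ∑ i, ∑ j, (if j < i then f i j else 0) = ∑ i, ∑ j, if i < j then f j i else 0 :=
    sum_comm
  rw [sum_filter, ← univ_product_univ, sum_product' (f := fun i j =>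
    if i < j then f i j + f j i else 0)]
  simp_rw [ite_add_zero]
  conv_lhs => rw [sum_congr rfl fun i _ => sum_congr rfl fun j _ => hsplit i j]
  simp only [sum_add_distrib, hlower, sum_ite_eq, mem_univ, if_true]

section CliffordAlgebra

variable {ι K R : Type*} [Field K] [Ring R] [Algebra K R]

def cliffordVec [Fintype ι] (C : ι → R) (u : ι → K) : R := ∑ i, u i • C i

def wedge (u v : ι → K) : ι → ι → K := fun i j => u i * v j - u j * v i

def cliffordBivec [Fintype ι] [LinearOrder ι] (C : ι → R) (α : ι → ι → K) : R :=
  ∑ p ∈ univ.filter (fun p : ι × ι => p.1 < p.2), α p.1 p.2 • (C p.1 * C p.2)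

variable (K) in
def IsCliffordOrthonormal [DecidableEq ι] (C : ι → R) : Prop :=
  ∀ i j, C i * C j + C j * C i = (if i = j then -2 else 0 : K) • 1

theorem mul_add_smul_one_mul_self {X Y : R} {k a b : K}
    (hXY : X * Y + Y * X = (-2 * k) • 1) (hX : X * X = (-a) • 1) (hY : Y * Y = (-b) • 1) :
    (X * Y + k • 1) * (X * Y + k • 1) = (k ^ 2 - a * b) • 1 := by
  have hXYXY : X * Y * (X * Y) = (-2 * k) • (X * Y) - X * X * (Y * Y) := by
    rw [show X * Y * (X * Y) = X * (Y * X) * Y by noncomm_ring, eq_sub_of_add_eq' hXY,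
      mul_sub, sub_mul, mul_smul_comm, smul_mul_assoc, mul_one,
      show X * (X * Y) * Y = X * X * (Y * Y) by noncomm_ring]
  rw [add_mul, mul_add, mul_add, hXYXY, hX, hY]
  simp only [smul_mul_assoc, mul_smul_comm, one_mul, mul_one]
  module

theorem exists_eq_wedge_of_plucker {α : ι → ι → K}
    (h : ∀ a b p q, α a b * α p q - α a p * α b q + α a q * α b p = 0) :
    ∃ u v : ι → K, α = wedge u v := by
  by_cases h0 : ∃ a b, α a b ≠ 0
  · obtain ⟨a, b, hab⟩ := h0
    refine ⟨fun p => α a p / α a b, fun q => α b q, funext₂ fun p q => ?_⟩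
    simp only [wedge]
    field_simp
    linear_combination h a b p q
  · push Not at h0
    exact ⟨0, 0, funext₂ fun p q => by simp [h0, wedge]⟩

theorem sum_wedge_sq [CharZero K] [Fintype ι] [LinearOrder ι] (u v : ι → K) :
    ∑ p ∈ univ.filter (fun p : ι × ι => p.1 < p.2), wedge u v p.1 p.2 ^ 2
      = (∑ i, u i ^ 2) * (∑ i, v i ^ 2) - (∑ i, u i * v i) ^ 2 := by
  have hterm : ∀ i j, wedge u v i j ^ 2
      = u i ^ 2 * v j ^ 2 + u j ^ 2 * v i ^ 2 - 2 * (u i * v i * (u j * v j)) := by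
    intro i j
    simp only [wedge]
    ring
  have hall : ∑ i, ∑ j, wedge u v i j ^ 2
      = 2 * ((∑ i, u i ^ 2) * (∑ i, v i ^ 2) - (∑ i, u i * v i) ^ 2) := by
    simp only [hterm, sum_add_distrib, sum_sub_distrib, ← mul_sum, ← sum_mul]
    ring
  have hsplit : ∑ i, ∑ j, wedge u v i j ^ 2
      = 2 * ∑ p ∈ univ.filter (fun p : ι × ι => p.1 < p.2), wedge u v p.1 p.2 ^ 2 := by
    have hswap : ∀ i j, wedge u v j i ^ 2 = wedge u v i j ^ 2 := fun i j => by
      simp only [wedge]; ring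
    have hdiag : ∀ i, wedge u v i i = 0 := fun i => sub_self _
    rw [sum_sum_eq_sum_lt_add_sum_diag, mul_sum]
    simp only [hdiag, ne_eq, OfNat.ofNat_ne_zero, not_false_eq_true, zero_pow, sum_const_zero,
      add_zero]
    exact sum_congr rfl fun p _ => by rw [hswap, two_mul]
  linear_combination (hsplit.symm.trans hall) / 2

namespace IsCliffordOrthonormal

variable [DecidableEq ι] {C : ι → R}

theorem mul_self [CharZero K] (hC : IsCliffordOrthonormal K C) (i : ι) : C i * C i = -1 := by
  have h := hC i i
  rw [if_pos rfl, ← two_smul K, neg_smul, ← smul_neg] at h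
  exact smul_right_injective R (two_ne_zero' K) h

theorem mul_swap (hC : IsCliffordOrthonormal K C) {i j : ι} (hij : i ≠ j) :
    C j * C i = -(C i * C j) := by
  have h := hC i j
  rw [if_neg hij, zero_smul] at h
  exact (neg_eq_of_add_eq_zero_right h).symm

theorem cliffordVec_mul_add_mul_swap [Fintype ι] (hC : IsCliffordOrthonormal K C) (u v : ι → K) :
    cliffordVec C u * cliffordVec C v + cliffordVec C v * cliffordVec C u
      = (-2 * ∑ i, u i * v i) • 1 := by
  simp only [cliffordVec, sum_mul_sum, smul_mul_smul_comm]
  rw [sum_comm (f := fun i j => (v i * u j) • (C i * C j)), ← sum_add_distrib]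
  simp only [← sum_add_distrib, mul_comm (v _), ← smul_add, hC _ _, smul_smul, ← sum_smul]
  simp [mul_sum, mul_comm]

theorem cliffordVec_mul_self [CharZero K] [Fintype ι] (hC : IsCliffordOrthonormal K C)
    (u : ι → K) : cliffordVec C u * cliffordVec C u = (-∑ i, u i ^ 2) • 1 := by
  have h := hC.cliffordVec_mul_add_mul_swap u u
  rw [← two_smul K, show -2 * ∑ i, u i * u i = 2 * -∑ i, u i ^ 2 by simp [sq, mul_sum],
    mul_smul] at h
  exact smul_right_injective R (two_ne_zero' K) h

theorem cliffordBivec_wedge [CharZero K] [Fintype ι] [LinearOrder ι]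
    (hC : IsCliffordOrthonormal K C) (u v : ι → K) :
    cliffordBivec C (wedge u v) = cliffordVec C u * cliffordVec C v + (∑ i, u i * v i) • 1 := by
  have h : cliffordVec C u * cliffordVec C v = ∑ i, ∑ j, (u i * v j) • (C i * C j) := by
    simp only [cliffordVec, sum_mul_sum, smul_mul_smul_comm]
  have hlt : ∀ p ∈ univ.filter (fun p : ι × ι => p.1 < p.2),
      (u p.1 * v p.2) • (C p.1 * C p.2) + (u p.2 * v p.1) • (C p.2 * C p.1)
        = wedge u v p.1 p.2 • (C p.1 * C p.2) := by
    intro p hp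
    rw [hC.mul_swap (mem_filter.1 hp).2.ne, wedge, sub_smul, smul_neg, sub_eq_add_neg]
  rw [h, sum_sum_eq_sum_lt_add_sum_diag, sum_congr rfl hlt]
  simp only [hC.mul_self, smul_neg, sum_neg_distrib, sum_smul, cliffordBivec]
  abel

theorem cliffordBivec_mul_self [CharZero K] [Fintype ι] [LinearOrder ι]
    (hC : IsCliffordOrthonormal K C) {α : ι → ι → K}
    (hα : ∀ a b p q, α a b * α p q - α a p * α b q + α a q * α b p = 0) :
    cliffordBivec C α * cliffordBivec C α
      = (-∑ p ∈ univ.filter (fun p : ι × ι => p.1 < p.2), α p.1 p.2 ^ 2) • 1 := by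
  obtain ⟨u, v, rfl⟩ := exists_eq_wedge_of_plucker hα
  rw [hC.cliffordBivec_wedge, sum_wedge_sq, mul_add_smul_one_mul_self
    (hC.cliffordVec_mul_add_mul_swap u v) (hC.cliffordVec_mul_self u) (hC.cliffordVec_mul_self v)]
  congr 1
  ring

end IsCliffordOrthonormal
end CliffordAlgebra

section SkewAdjoint

variable {𝕜 E : Type*} [RCLike 𝕜] [NormedAddCommGroup E] [InnerProductSpace 𝕜 E]

theorem norm_apply_eq_sqrt_mul_norm_of_skew {T : E →ₗ[𝕜] E} {r : ℝ}
    (hT : ∀ x y, inner 𝕜 (T x) y = -inner 𝕜 x (T y)) (hT2 : T * T = (-(r : 𝕜)) • 1) (hr : 0 ≤ r)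
    (x : E) : ‖T x‖ = √r * ‖x‖ := by
  have h : (‖T x‖ ^ 2 : 𝕜) = (r * ‖x‖ ^ 2 : ℝ) := by
    rw [← inner_self_eq_norm_sq_to_K, hT, ← Module.End.mul_apply, hT2]
    simp [inner_smul_right, inner_self_eq_norm_sq_to_K]
  have h' : ‖T x‖ ^ 2 = r * ‖x‖ ^ 2 := by exact_mod_cast h
  rw [← Real.sqrt_sq (norm_nonneg (T x)), ← Real.sqrt_sq (norm_nonneg x), ← Real.sqrt_mul hr, h']

theorem inner_cliffordBivec_apply [DecidableEq ι] [Fintype ι] [LinearOrder ι]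
    {C : ι → E →ₗ[𝕜] E} (hC : IsCliffordOrthonormal 𝕜 C)
    (hskew : ∀ i x y, inner 𝕜 (C i x) y = -inner 𝕜 x (C i y)) (α : ι → ι → ℝ) (x y : E) :
    inner 𝕜 (cliffordBivec C (fun i j => (α i j : 𝕜)) x) y
      = -inner 𝕜 x (cliffordBivec C (fun i j => (α i j : 𝕜)) y) := by
  simp only [cliffordBivec, LinearMap.sum_apply, sum_inner, inner_sum, ← sum_neg_distrib]
  refine sum_congr rfl fun p hp => ?_
  have hswap := congrArg (· y) (hC.mul_swap (mem_filter.1 hp).2.ne)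
  simp only [LinearMap.smul_apply, Module.End.mul_apply, LinearMap.neg_apply] at hswap ⊢
  rw [inner_smul_left, inner_smul_right, RCLike.conj_ofReal, hskew, hskew, hswap, inner_neg_right]
  ring

end SkewAdjoint

theorem stmt_8_general (n : ℕ) {S : Type*} [NormedAddCommGroup S] [InnerProductSpace ℂ S]
    (c : EuclideanSpace ℝ (Fin n) → (S →ₗ[ℂ] S))
    (hclif : ∀ u v, (c u) ∘ₗ (c v) + (c v) ∘ₗ (c u)
      = (((-2 * (inner ℝ u v : ℝ) : ℝ)) : ℂ) • (LinearMap.id : S →ₗ[ℂ] S))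
    (hskew : ∀ v (φ ψ : S), (inner ℂ (c v φ) ψ : ℂ) = -inner ℂ φ (c v ψ))
    (α : Fin n → Fin n → ℝ)
    (hwedge : ∀ a b p q : Fin n, α a b * α p q - α a p * α b q + α a q * α b p = 0) :
    let cα : S →ₗ[ℂ] S :=
      ∑ p ∈ Finset.univ.filter (fun p : Fin n × Fin n => p.1 < p.2),
        ((α p.1 p.2 : ℝ) : ℂ) •
          ((c (EuclideanSpace.single p.1 1)) ∘ₗ (c (EuclideanSpace.single p.2 1)))
    let normsq : ℝ :=
      ∑ p ∈ Finset.univ.filter (fun p : Fin n × Fin n => p.1 < p.2), (α p.1 p.2) ^ 2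
    cα ∘ₗ cα = ((-normsq : ℝ) : ℂ) • (LinearMap.id : S →ₗ[ℂ] S) ∧
      ∀ φ : S, ‖cα φ‖ = Real.sqrt normsq * ‖φ‖ := by
  intro cα normsq
  set C : Fin n → S →ₗ[ℂ] S := fun i => c (EuclideanSpace.single i 1)
  have hC : IsCliffordOrthonormal ℂ C := fun i j => by
    have h := hclif (EuclideanSpace.single i 1) (EuclideanSpace.single j 1)
    rw [EuclideanSpace.inner_single_left, PiLp.single_apply, map_one, one_mul] at h
    exact h.trans (by split_ifs <;> simp [Module.End.one_eq_id])
  have hsq : cα * cα = (-(normsq : ℂ)) • 1 := by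
    have hcα : cα = cliffordBivec C fun i j => (α i j : ℂ) := rfl
    rw [hcα, hC.cliffordBivec_mul_self fun a b p q => by exact_mod_cast hwedge a b p q]
    push_cast [normsq]
    rfl
  exact ⟨by rw [Complex.ofReal_neg]; exact hsq, norm_apply_eq_sqrt_mul_norm_of_skew
    (inner_cliffordBivec_apply hC (fun i => hskew _) α) hsq (sum_nonneg fun p _ => sq_nonneg _)⟩

/-- If a real 2-form `α` satisfies `α ∧ α = 0`, then `c(α)² = -|α|²·id` on a Hermitian
Clifford module, and consequently `|c(α)φ| = |α|·|φ|`.  Here `|α|² = ∑_{i<j} α_{ij}²`. -/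
theorem stmt_8 (n : ℕ) {S : Type*} [NormedAddCommGroup S] [InnerProductSpace ℂ S]
    (c : EuclideanSpace ℝ (Fin n) → (S →ₗ[ℂ] S))
    (hclif : ∀ u v, (c u) ∘ₗ (c v) + (c v) ∘ₗ (c u)
      = (((-2 * (inner ℝ u v : ℝ) : ℝ)) : ℂ) • (LinearMap.id : S →ₗ[ℂ] S))
    (hskew : ∀ v (φ ψ : S), (inner ℂ (c v φ) ψ : ℂ) = -inner ℂ φ (c v ψ))
    (α : Fin n → Fin n → ℝ) (hα : ∀ i j, α i j = -α j i)
    (hwedge : ∀ a b p q : Fin n, α a b * α p q - α a p * α b q + α a q * α b p = 0) :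
    let cα : S →ₗ[ℂ] S :=
      ∑ p ∈ Finset.univ.filter (fun p : Fin n × Fin n => p.1 < p.2),
        ((α p.1 p.2 : ℝ) : ℂ) •
          ((c (EuclideanSpace.single p.1 1)) ∘ₗ (c (EuclideanSpace.single p.2 1)))
    let normsq : ℝ :=
      ∑ p ∈ Finset.univ.filter (fun p : Fin n × Fin n => p.1 < p.2), (α p.1 p.2) ^ 2
    cα ∘ₗ cα = ((-normsq : ℝ) : ℂ) • (LinearMap.id : S →ₗ[ℂ] S) ∧
      ∀ φ : S, ‖cα φ‖ = Real.sqrt normsq * ‖φ‖ :=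
  stmt_8_general n c hclif hskew α hwedge
end

section
/- Let V be a real inner product space with orthonormal basis {e_i} and c a Clifford action satisfying the Clifford relations. For any antisymmetric real coefficients α(e_i,e_j), the 'fully distinct indices' part of the expansion of (Σ_{i<j}α(e_i,e_j)c(e_i)c(e_j))² equals Σ_{i_1<i_2<i_3<i_4} (α∧α)(e_{i_1},e_{i_2},e_{i_3},e_{i_4}) c(e_{i_1})c(e_{i_2})c(e_{i_3})c(e_{i_4}). In particular, if α∧α = 0 this part vanishes. -/
section aux
variable {n : ℕ} {S : Type*} [AddCommGroup S] [Module ℂ S]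
variable (c : Fin n → Module.End ℂ S)

lemma comm_pair (hanti : ∀ i j, i ≠ j → c i * c j = -(c j * c i))
    {a b d : Fin n} (hab : a ≠ b) (had : a ≠ d) :
    c a * (c b * c d) = (c b * c d) * c a := by
  calc c a * (c b * c d) = (c a * c b) * c d := by rw [mul_assoc]
    _ = (-(c b * c a)) * c d := by rw [hanti a b hab]
    _ = -(c b * (c a * c d)) := by rw [neg_mul, mul_assoc]
    _ = -(c b * (-(c d * c a))) := by rw [hanti a d had]
    _ = (c b * c d) * c a := by rw [mul_neg, neg_neg, ← mul_assoc]

lemma op_swap12 (hanti : ∀ i j, i ≠ j → c i * c j = -(c j * c i))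
    {i j k l : Fin n} (h : i ≠ j) :
    c j * c i * c k * c l = -(c i * c j * c k * c l) := by
  rw [hanti j i h.symm]; simp [neg_mul]

lemma op_swap34 (hanti : ∀ i j, i ≠ j → c i * c j = -(c j * c i))
    {i j k l : Fin n} (h : k ≠ l) :
    c i * c j * c l * c k = -(c i * c j * c k * c l) := by
  rw [mul_assoc (c i * c j), hanti l k h.symm, mul_neg, ← mul_assoc]

lemma op_swap23 (hanti : ∀ i j, i ≠ j → c i * c j = -(c j * c i))
    {i j k l : Fin n} (h : j ≠ k) :
    c i * c k * c j * c l = -(c i * c j * c k * c l) := by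
  rw [mul_assoc (c i), hanti k j h.symm, mul_neg, ← mul_assoc, neg_mul]

lemma op_pairswap (hanti : ∀ i j, i ≠ j → c i * c j = -(c j * c i))
    {i j k l : Fin n} (hik : i ≠ k) (hil : i ≠ l) (hjk : j ≠ k) (hjl : j ≠ l) :
    c k * c l * c i * c j = c i * c j * c k * c l := by
  calc c k * c l * c i * c j = (c i * (c k * c l)) * c j := by
        rw [← comm_pair c hanti hik hil]
    _ = c i * ((c k * c l) * c j) := by rw [mul_assoc]
    _ = c i * (c j * (c k * c l)) := by rw [← comm_pair c hanti hjk hjl]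
    _ = c i * c j * c k * c l := by rw [← mul_assoc, ← mul_assoc]

lemma op_move4 (hanti : ∀ i j, i ≠ j → c i * c j = -(c j * c i))
    {a b d e : Fin n} (hdb : d ≠ b) (hde : d ≠ e) :
    c a * c d * c b * c e = c a * c b * c e * c d := by
  calc c a * c d * c b * c e = c a * (c d * (c b * c e)) := by rw [mul_assoc, mul_assoc]
    _ = c a * ((c b * c e) * c d) := by rw [comm_pair c hanti hdb hde]
    _ = c a * c b * c e * c d := by rw [← mul_assoc, ← mul_assoc]

end aux

theorem main_eq (n : ℕ) {S : Type*} [AddCommGroup S] [Module ℂ S]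
    (c : Fin n → Module.End ℂ S)
    (hanti : ∀ i j, i ≠ j → c i * c j = -(c j * c i))
    (α : Fin n → Fin n → ℝ) (hα : ∀ i j, α i j = -α j i) :
    (1 / 4 : ℂ) • ∑ t ∈ Finset.univ.filter
        (fun t : Fin n × Fin n × Fin n × Fin n =>
          t.1 ≠ t.2.1 ∧ t.1 ≠ t.2.2.1 ∧ t.1 ≠ t.2.2.2 ∧
          t.2.1 ≠ t.2.2.1 ∧ t.2.1 ≠ t.2.2.2 ∧ t.2.2.1 ≠ t.2.2.2),
        ((α t.1 t.2.1 * α t.2.2.1 t.2.2.2 : ℝ) : ℂ) •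
          (c t.1 * c t.2.1 * c t.2.2.1 * c t.2.2.2)
    = ∑ t ∈ Finset.univ.filter
        (fun t : Fin n × Fin n × Fin n × Fin n =>
          t.1 < t.2.1 ∧ t.2.1 < t.2.2.1 ∧ t.2.2.1 < t.2.2.2),
        ((2 * (α t.1 t.2.1 * α t.2.2.1 t.2.2.2
            - α t.1 t.2.2.1 * α t.2.1 t.2.2.2
            + α t.1 t.2.2.2 * α t.2.1 t.2.2.1) : ℝ) : ℂ) •
          (c t.1 * c t.2.1 * c t.2.2.1 * c t.2.2.2) := by
  classical
  set F : Fin n × Fin n × Fin n × Fin n → Module.End ℂ S := fun t =>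
    ((α t.1 t.2.1 * α t.2.2.1 t.2.2.2 : ℝ) : ℂ) •
      (c t.1 * c t.2.1 * c t.2.2.1 * c t.2.2.2) with hF
  set F2 : Fin n × Fin n × Fin n × Fin n → Module.End ℂ S := fun t =>
    ((α t.1 t.2.2.1 * α t.2.1 t.2.2.2 : ℝ) : ℂ) •
      (c t.1 * c t.2.2.1 * c t.2.1 * c t.2.2.2) with hF2
  set F3 : Fin n × Fin n × Fin n × Fin n → Module.End ℂ S := fun t =>
    ((α t.1 t.2.2.2 * α t.2.1 t.2.2.1 : ℝ) : ℂ) •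
      (c t.1 * c t.2.2.2 * c t.2.1 * c t.2.2.1) with hF3
  set D : Finset (Fin n × Fin n × Fin n × Fin n) := Finset.univ.filter
    (fun t => t.1 ≠ t.2.1 ∧ t.1 ≠ t.2.2.1 ∧ t.1 ≠ t.2.2.2 ∧
      t.2.1 ≠ t.2.2.1 ∧ t.2.1 ≠ t.2.2.2 ∧ t.2.2.1 ≠ t.2.2.2) with hD
  set Srt : Finset (Fin n × Fin n × Fin n × Fin n) := Finset.univ.filter
    (fun t => t.1 < t.2.1 ∧ t.2.1 < t.2.2.1 ∧ t.2.2.1 < t.2.2.2) with hSrt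
  set S1 : Finset (Fin n × Fin n × Fin n × Fin n) :=
    D.filter (fun t => t.1 < t.2.1) with hS1
  set S2 : Finset (Fin n × Fin n × Fin n × Fin n) :=
    S1.filter (fun t => t.2.2.1 < t.2.2.2) with hS2
  set S3 : Finset (Fin n × Fin n × Fin n × Fin n) :=
    S2.filter (fun t => t.1 < t.2.2.1) with hS3
  have h1 : ∑ t ∈ D, F t = ∑ t ∈ S1, F t + ∑ t ∈ S1, F t := by
    rw [← Finset.sum_filter_add_sum_filter_not D (fun t => t.1 < t.2.1) F]
    congr 1
    refine Finset.sum_nbij' (i := fun t => (t.2.1, t.1, t.2.2))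
      (j := fun t => (t.2.1, t.1, t.2.2)) ?_ ?_ (fun t _ => rfl) (fun t _ => rfl) ?_
    · intro t ht
      simp only [hD, hS1, Finset.mem_filter, Finset.mem_univ, true_and] at ht ⊢
      omega
    · intro t ht
      simp only [hD, hS1, Finset.mem_filter, Finset.mem_univ, true_and] at ht ⊢
      omega
    · intro t ht
      simp only [hD, Finset.mem_filter, Finset.mem_univ, true_and] at ht
      obtain ⟨⟨h12, h13, h14, h23, h24, h34⟩, hlt⟩ := ht
      simp only [hF]
      rw [op_swap12 c hanti h12, hα t.2.1 t.1]
      push_cast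
      module
  have h2 : ∑ t ∈ S1, F t = ∑ t ∈ S2, F t + ∑ t ∈ S2, F t := by
    rw [← Finset.sum_filter_add_sum_filter_not S1 (fun t => t.2.2.1 < t.2.2.2) F]
    congr 1
    refine Finset.sum_nbij' (i := fun t => (t.1, t.2.1, t.2.2.2, t.2.2.1))
      (j := fun t => (t.1, t.2.1, t.2.2.2, t.2.2.1)) ?_ ?_ (fun t _ => rfl) (fun t _ => rfl) ?_
    · intro t ht
      simp only [hD, hS1, hS2, Finset.mem_filter, Finset.mem_univ, true_and] at ht ⊢
      omega
    · intro t ht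
      simp only [hD, hS1, hS2, Finset.mem_filter, Finset.mem_univ, true_and] at ht ⊢
      omega
    · intro t ht
      simp only [hD, hS1, Finset.mem_filter, Finset.mem_univ, true_and] at ht
      obtain ⟨⟨⟨h12, h13, h14, h23, h24, h34⟩, hlt1⟩, hlt2⟩ := ht
      simp only [hF]
      rw [op_swap34 c hanti h34, hα t.2.2.2 t.2.2.1]
      push_cast
      module
  have h3 : ∑ t ∈ S2, F t = ∑ t ∈ S3, F t + ∑ t ∈ S3, F t := by
    rw [← Finset.sum_filter_add_sum_filter_not S2 (fun t => t.1 < t.2.2.1) F]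
    congr 1
    refine Finset.sum_nbij' (i := fun t => (t.2.2.1, t.2.2.2, t.1, t.2.1))
      (j := fun t => (t.2.2.1, t.2.2.2, t.1, t.2.1)) ?_ ?_ (fun t _ => rfl) (fun t _ => rfl) ?_
    · intro t ht
      simp only [hD, hS1, hS2, hS3, Finset.mem_filter, Finset.mem_univ, true_and] at ht ⊢
      omega
    · intro t ht
      simp only [hD, hS1, hS2, hS3, Finset.mem_filter, Finset.mem_univ, true_and] at ht ⊢
      omega
    · intro t ht
      simp only [hD, hS1, hS2, Finset.mem_filter, Finset.mem_univ, true_and] at ht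
      obtain ⟨⟨⟨⟨h12, h13, h14, h23, h24, h34⟩, hlt1⟩, hlt2⟩, hlt3⟩ := ht
      simp only [hF]
      rw [op_pairswap c hanti h13 h14 h23 h24]
      push_cast
      module
  have hA : ∑ t ∈ S3.filter (fun t => t.2.1 < t.2.2.1), F t = ∑ t ∈ Srt, F t := by
    congr 1
    ext t
    simp only [hD, hS1, hS2, hS3, hSrt, Finset.mem_filter, Finset.mem_univ, true_and]
    omega
  have hB : ∑ t ∈ (S3.filter (fun t => ¬ t.2.1 < t.2.2.1)).filter
      (fun t => t.2.1 < t.2.2.2), F t = ∑ t ∈ Srt, F2 t := by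
    refine Finset.sum_nbij' (i := fun t => (t.1, t.2.2.1, t.2.1, t.2.2.2))
      (j := fun t => (t.1, t.2.2.1, t.2.1, t.2.2.2)) ?_ ?_ (fun t _ => rfl) (fun t _ => rfl)
      (fun t _ => rfl)
    · intro t ht
      simp only [hD, hS1, hS2, hS3, hSrt, Finset.mem_filter, Finset.mem_univ, true_and] at ht ⊢
      omega
    · intro t ht
      simp only [hD, hS1, hS2, hS3, hSrt, Finset.mem_filter, Finset.mem_univ, true_and] at ht ⊢
      omega
  have hC : ∑ t ∈ (S3.filter (fun t => ¬ t.2.1 < t.2.2.1)).filter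
      (fun t => ¬ t.2.1 < t.2.2.2), F t = ∑ t ∈ Srt, F3 t := by
    refine Finset.sum_nbij' (i := fun t => (t.1, t.2.2.1, t.2.2.2, t.2.1))
      (j := fun t => (t.1, t.2.2.2, t.2.1, t.2.2.1)) ?_ ?_ (fun t _ => rfl) (fun t _ => rfl)
      (fun t _ => rfl)
    · intro t ht
      simp only [hD, hS1, hS2, hS3, hSrt, Finset.mem_filter, Finset.mem_univ, true_and] at ht ⊢
      omega
    · intro t ht
      simp only [hD, hS1, hS2, hS3, hSrt, Finset.mem_filter, Finset.mem_univ, true_and] at ht ⊢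
      omega
  have h4 : ∑ t ∈ S3, F t = ∑ t ∈ Srt, F t + ∑ t ∈ Srt, F2 t + ∑ t ∈ Srt, F3 t := by
    rw [← Finset.sum_filter_add_sum_filter_not S3 (fun t => t.2.1 < t.2.2.1) F,
      ← Finset.sum_filter_add_sum_filter_not
        (S3.filter (fun t => ¬ t.2.1 < t.2.2.1)) (fun t => t.2.1 < t.2.2.2) F,
      hA, hB, hC, add_assoc]
  rw [h1, h2, h3, h4]
  rw [show ∀ X Y Z : Module.End ℂ S,
      (1/4 : ℂ) • (X + Y + Z + (X + Y + Z) + (X + Y + Z + (X + Y + Z)) +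
        (X + Y + Z + (X + Y + Z) + (X + Y + Z + (X + Y + Z)))) =
      (2 : ℂ) • X + (2 : ℂ) • Y + (2 : ℂ) • Z from fun X Y Z => by module]
  rw [Finset.smul_sum, Finset.smul_sum, Finset.smul_sum,
    ← Finset.sum_add_distrib, ← Finset.sum_add_distrib]
  refine Finset.sum_congr rfl ?_
  intro t ht
  simp only [hSrt, Finset.mem_filter, Finset.mem_univ, true_and] at ht
  obtain ⟨hab, hbc, hcd⟩ := ht
  have hbc' : (t.2.1 : Fin n) ≠ t.2.2.1 := by omega
  have hdb : (t.2.2.2 : Fin n) ≠ t.2.1 := by omega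
  have hdc : (t.2.2.2 : Fin n) ≠ t.2.2.1 := by omega
  simp only [hF, hF2, hF3]
  rw [op_swap23 c hanti hbc', op_move4 c hanti hdb hdc]
  push_cast
  module

/-- The "fully distinct indices" part of the expansion of `c(α)²` equals
`∑_{i₁<i₂<i₃<i₄} (α∧α)(e_{i₁},…,e_{i₄}) c(e_{i₁})⋯c(e_{i₄})`; in particular it vanishes
when `α ∧ α = 0`. -/
theorem stmt_9 (n : ℕ) {S : Type*} [AddCommGroup S] [Module ℂ S]
    (c : Fin n → Module.End ℂ S)
    (hanti : ∀ i j, i ≠ j → c i * c j = -(c j * c i))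
    (hsq : ∀ i, c i * c i = -1)
    (α : Fin n → Fin n → ℝ) (hα : ∀ i j, α i j = -α j i) :
    let typeI : Module.End ℂ S :=
      (1 / 4 : ℂ) • ∑ t ∈ Finset.univ.filter
        (fun t : Fin n × Fin n × Fin n × Fin n =>
          t.1 ≠ t.2.1 ∧ t.1 ≠ t.2.2.1 ∧ t.1 ≠ t.2.2.2 ∧
          t.2.1 ≠ t.2.2.1 ∧ t.2.1 ≠ t.2.2.2 ∧ t.2.2.1 ≠ t.2.2.2),
        ((α t.1 t.2.1 * α t.2.2.1 t.2.2.2 : ℝ) : ℂ) •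
          (c t.1 * c t.2.1 * c t.2.2.1 * c t.2.2.2)
    let wedgeSum : Module.End ℂ S :=
      ∑ t ∈ Finset.univ.filter
        (fun t : Fin n × Fin n × Fin n × Fin n =>
          t.1 < t.2.1 ∧ t.2.1 < t.2.2.1 ∧ t.2.2.1 < t.2.2.2),
        ((2 * (α t.1 t.2.1 * α t.2.2.1 t.2.2.2
            - α t.1 t.2.2.1 * α t.2.1 t.2.2.2
            + α t.1 t.2.2.2 * α t.2.1 t.2.2.1) : ℝ) : ℂ) •
          (c t.1 * c t.2.1 * c t.2.2.1 * c t.2.2.2)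
    typeI = wedgeSum ∧
      ((∀ a b p q : Fin n, α a b * α p q - α a p * α b q + α a q * α b p = 0) →
        typeI = 0) := by
  intro typeI wedgeSum
  have hmain : typeI = wedgeSum := main_eq n c hanti α hα
  refine ⟨hmain, fun hz => hmain.trans ?_⟩
  refine Finset.sum_eq_zero fun t ht => ?_
  have h0 := hz t.1 t.2.1 t.2.2.1 t.2.2.2
  rw [h0]
  simp
end

section
/- Let V be a real inner product space with orthonormal basis {e_i}, and c a Clifford action. For any real 2-form α, the sum over all index triples (i_1<i_2<i_3) and permutations of terms in the expansion of c(α)² in which exactly one index is repeated vanishes; i.e., the 'three distinct indices' contribution to c(α)² is zero. -/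
section aux
variable {S : Type*} [AddCommGroup S] [Module ℂ S] {n : ℕ}
variable (c : Fin n → Module.End ℂ S)
variable (hanti : ∀ i j, i ≠ j → c i * c j = -(c j * c i))
variable (hsq : ∀ i, c i * c i = -1)

include hanti in
lemma sw (i j : Fin n) (h : i ≠ j) : ∀ x : Module.End ℂ S,
    c i * (c j * x) = -(c j * (c i * x)) := by
  intro x; rw [← mul_assoc, hanti i j h, neg_mul, mul_assoc]

include hsq in
lemma sq' (i : Fin n) : ∀ x : Module.End ℂ S, c i * (c i * x) = -x := by
  intro x; rw [← mul_assoc, hsq, neg_one_mul]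

include hanti hsq in
lemma cancel1 (a b d : Fin n) (hab : a ≠ b) (had : a ≠ d) (hbd : b ≠ d) :
    c a * c b * (c a * c d) + c a * c d * (c a * c b) = 0 := by
  simp only [mul_assoc, sw c hanti b a hab.symm, sw c hanti d a had.symm,
    sw c hanti d b hbd.symm, hanti d b hbd.symm, hanti d a had.symm, hanti b a hab.symm,
    sq' c hsq a, sq' c hsq b, hsq, mul_neg, neg_neg, neg_mul, mul_one, mul_neg_one]
  abel

include hanti hsq in
lemma cancel2 (a b d : Fin n) (hab : a ≠ b) (hda : d ≠ a) (hbd : b ≠ d) :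
    c a * c b * (c d * c a) + c d * c a * (c a * c b) = 0 := by
  simp only [mul_assoc, sw c hanti b a hab.symm, sw c hanti d a hda,
    sw c hanti d b hbd.symm, hanti d b hbd.symm, hanti d a hda, hanti b a hab.symm,
    sq' c hsq a, sq' c hsq b, hsq, mul_neg, neg_neg, neg_mul, mul_one, mul_neg_one]
  abel

include hanti hsq in
lemma cancel3 (a b d : Fin n) (hab : a ≠ b) (hbd : b ≠ d) (had : a ≠ d) :
    c a * c b * (c b * c d) + c b * c d * (c a * c b) = 0 := by
  simp only [mul_assoc, sw c hanti b a hab.symm, sw c hanti d a had.symm,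
    sw c hanti d b hbd.symm, hanti d b hbd.symm, hanti d a had.symm, hanti b a hab.symm,
    sq' c hsq a, sq' c hsq b, hsq, mul_neg, neg_neg, neg_mul, mul_one, mul_neg_one]
  abel

include hanti hsq in
lemma cancel4 (a b d : Fin n) (hab : a ≠ b) (hdb : d ≠ b) (had : a ≠ d) :
    c a * c b * (c d * c b) + c d * c b * (c a * c b) = 0 := by
  simp only [mul_assoc, sw c hanti b a hab.symm, sw c hanti d a had.symm,
    sw c hanti d b hdb, hanti d b hdb, hanti d a had.symm, hanti b a hab.symm,
    sq' c hsq a, sq' c hsq b, hsq, mul_neg, neg_neg, neg_mul, mul_one, mul_neg_one]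
  abel

end aux

set_option maxHeartbeats 1000000 in
/-- The "three distinct indices" contribution to the expansion of `c(α)²` (terms where
exactly one index among `p,q` coincides with `k` or `l`) vanishes. -/
theorem stmt_10 (n : ℕ) {S : Type*} [AddCommGroup S] [Module ℂ S]
    (c : Fin n → Module.End ℂ S)
    (hanti : ∀ i j, i ≠ j → c i * c j = -(c j * c i))
    (hsq : ∀ i, c i * c i = -1)
    (α : Fin n → Fin n → ℝ) (hα : ∀ i j, α i j = -α j i) :
    ∑ t ∈ Finset.univ.filter
        (fun t : Fin n × Fin n × Fin n × Fin n =>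
          t.1 ≠ t.2.1 ∧ t.2.2.1 ≠ t.2.2.2 ∧
          ((t.1 = t.2.2.1 ∧ t.1 ≠ t.2.2.2 ∧ t.2.1 ≠ t.2.2.1 ∧ t.2.1 ≠ t.2.2.2) ∨
           (t.1 = t.2.2.2 ∧ t.1 ≠ t.2.2.1 ∧ t.2.1 ≠ t.2.2.1 ∧ t.2.1 ≠ t.2.2.2) ∨
           (t.2.1 = t.2.2.1 ∧ t.2.1 ≠ t.2.2.2 ∧ t.1 ≠ t.2.2.1 ∧ t.1 ≠ t.2.2.2) ∨
           (t.2.1 = t.2.2.2 ∧ t.2.1 ≠ t.2.2.1 ∧ t.1 ≠ t.2.2.1 ∧ t.1 ≠ t.2.2.2))),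
        ((α t.1 t.2.1 * α t.2.2.1 t.2.2.2 : ℝ) : ℂ) •
          (c t.1 * c t.2.1 * c t.2.2.1 * c t.2.2.2) = 0 := by
  apply Finset.sum_involution
    (g := fun t _ => (t.2.2.1, t.2.2.2, t.1, t.2.1))
  · -- cancellation
    rintro ⟨k, l, p, q⟩ ht
    simp only [Finset.mem_filter, Finset.mem_univ, true_and] at ht
    obtain ⟨hkl, hpq, hcase⟩ := ht
    have hscal : ((α p q * α k l : ℝ) : ℂ) = ((α k l * α p q : ℝ) : ℂ) := by
      rw [mul_comm]
    simp only [hscal]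
    rw [← smul_add]
    rcases hcase with ⟨h1, h2, h3, h4⟩ | ⟨h1, h2, h3, h4⟩ | ⟨h1, h2, h3, h4⟩ | ⟨h1, h2, h3, h4⟩
    · subst h1
      rw [mul_assoc (c k * c l), mul_assoc (c k * c q),
        cancel1 c hanti hsq k l q hkl h2 h4, smul_zero]
    · subst h1
      rw [mul_assoc (c k * c l), mul_assoc (c p * c k),
        cancel2 c hanti hsq k l p hkl (Ne.symm h2) h3, smul_zero]
    · subst h1
      rw [mul_assoc (c k * c l), mul_assoc (c l * c q),
        cancel3 c hanti hsq k l q hkl h2 h4, smul_zero]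
    · subst h1
      rw [mul_assoc (c k * c l), mul_assoc (c p * c l),
        cancel4 c hanti hsq k l p hkl (Ne.symm h2) h3, smul_zero]
  · -- no fixed points
    rintro ⟨k, l, p, q⟩ ht _
    simp only [Finset.mem_filter, Finset.mem_univ, true_and] at ht
    obtain ⟨hkl, hpq, hcase⟩ := ht
    intro heq
    rw [Prod.ext_iff, Prod.ext_iff, Prod.ext_iff] at heq
    obtain ⟨h1, h2, h3, h4⟩ := heq
    dsimp at h1 h2 h3 h4
    subst h1; subst h2
    rcases hcase with ⟨_, _, _, h⟩ | ⟨h, _, _, _⟩ | ⟨h, _, _, _⟩ | ⟨_, _, h, _⟩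
    · exact h rfl
    · exact hpq h
    · exact hpq h.symm
    · exact h rfl
  · -- involutive
    rintro ⟨k, l, p, q⟩ _
    rfl
  · -- membership
    rintro ⟨k, l, p, q⟩ ht
    simp only [Finset.mem_filter, Finset.mem_univ, true_and] at ht ⊢
    obtain ⟨hkl, hpq, hcase⟩ := ht
    refine ⟨hpq, hkl, ?_⟩
    rcases hcase with ⟨h1, h2, h3, h4⟩ | ⟨h1, h2, h3, h4⟩ | ⟨h1, h2, h3, h4⟩ | ⟨h1, h2, h3, h4⟩
    · exact Or.inl ⟨h1.symm, Ne.symm h3, Ne.symm h2, Ne.symm h4⟩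
    · exact Or.inr (Or.inr (Or.inl ⟨h1.symm, Ne.symm h4, Ne.symm h2, Ne.symm h3⟩))
    · exact Or.inr (Or.inl ⟨h1.symm, Ne.symm h3, Ne.symm h4, Ne.symm h2⟩)
    · exact Or.inr (Or.inr (Or.inr ⟨h1.symm, Ne.symm h4, Ne.symm h3, Ne.symm h2⟩))
end

section
/- Let V, W be real inner product spaces with dim V = dim W = n, and let F : Λ²(W) → Λ²(V) be the map on 2-vectors induced by a linear map T : W → V (i.e. F(u∧v) = Tu∧Tv). Suppose |F(ω)| ≤ |ω| for all ω ∈ Λ²(W), and suppose there is an orthonormal basis {ε_1,…,ε_n} of W with |F(ε_i∧ε_j)| = 1 for all i < j. Then the set {F(ε_i∧ε_j) : i<j} is an orthonormal subset of Λ²(V). -/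
open scoped RealInnerProductSpace

/- A linear contraction preserves the inner product of any two vectors whose norms it preserves:
apply contractivity to `a + b` and `a - b`. By the Gram-determinant formula the 2-vectors
`ε i ∧ ε j`, `i < j`, are orthonormal, and `F` preserves each of their norms. -/

theorem LinearMap.inner_map_map_of_norm_map_eq {E G : Type*}
    [NormedAddCommGroup E] [InnerProductSpace ℝ E]
    [NormedAddCommGroup G] [InnerProductSpace ℝ G]
    (F : E →ₗ[ℝ] G) (hF : ∀ x, ‖F x‖ ≤ ‖x‖) {a b : E}
    (ha : ‖F a‖ = ‖a‖) (hb : ‖F b‖ = ‖b‖) :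
    ⟪F a, F b⟫ = ⟪a, b⟫ := by
  have hsq : ∀ x, ‖F x‖ ^ 2 ≤ ‖x‖ ^ 2 := fun x => pow_le_pow_left₀ (norm_nonneg _) (hF x) 2
  have hadd := hsq (a + b)
  have hsub := hsq (a - b)
  rw [map_add, norm_add_sq_real, norm_add_sq_real] at hadd
  rw [map_sub, norm_sub_sq_real, norm_sub_sq_real] at hsub
  rw [ha, hb] at hadd hsub
  linarith

theorem orthonormal_wedge {ι E L : Type*} [LinearOrder ι]
    [NormedAddCommGroup E] [InnerProductSpace ℝ E]
    [NormedAddCommGroup L] [InnerProductSpace ℝ L]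
    (w : E → E → L)
    (hgram : ∀ u1 u2 v1 v2 : E, ⟪w u1 u2, w v1 v2⟫ = ⟪u1, v1⟫ * ⟪u2, v2⟫ - ⟪u1, v2⟫ * ⟪u2, v1⟫)
    {e : ι → E} (he : Orthonormal ℝ e) :
    Orthonormal ℝ (fun p : {p : ι × ι // p.1 < p.2} => w (e p.1.1) (e p.1.2)) := by
  rw [orthonormal_iff_ite] at he ⊢
  rintro ⟨⟨i, j⟩, hij⟩ ⟨⟨k, l⟩, hkl⟩
  have hcross : ¬(i = l ∧ j = k) := by
    rintro ⟨rfl, rfl⟩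
    exact lt_asymm hij hkl
  simp only [hgram, he, Subtype.mk.injEq, Prod.mk.injEq]
  by_cases hik : i = k <;> by_cases hjl : j = l <;> by_cases hil : i = l <;>
    simp_all

theorem stmt_11_general (n : ℕ)
    {W LW LV : Type*}
    [NormedAddCommGroup W] [InnerProductSpace ℝ W]
    [NormedAddCommGroup LW] [InnerProductSpace ℝ LW]
    [NormedAddCommGroup LV] [InnerProductSpace ℝ LV]
    (wW : W →ₗ[ℝ] W →ₗ[ℝ] LW)
    (hWgram : ∀ u1 u2 v1 v2 : W, (inner ℝ (wW u1 u2) (wW v1 v2) : ℝ)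
      = inner ℝ u1 v1 * inner ℝ u2 v2 - inner ℝ u1 v2 * inner ℝ u2 v1)
    (F : LW →ₗ[ℝ] LV)
    (hcontr : ∀ ω : LW, ‖F ω‖ ≤ ‖ω‖)
    (ε : OrthonormalBasis (Fin n) ℝ W)
    (hunit : ∀ i j, i < j → ‖F (wW (ε i) (ε j))‖ = 1) :
    (∀ i j, i < j → ‖F (wW (ε i) (ε j))‖ = 1) ∧
    ∀ i j k l, i < j → k < l → (i, j) ≠ (k, l) →
      (inner ℝ (F (wW (ε i) (ε j))) (F (wW (ε k) (ε l))) : ℝ) = 0 := by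
  have hwedge := orthonormal_wedge (fun u v => wW u v) hWgram ε.orthonormal
  have hnorm : ∀ i j, i < j → ‖F (wW (ε i) (ε j))‖ = ‖wW (ε i) (ε j)‖ := fun i j hij => by
    rw [hunit i j hij, hwedge.1 ⟨(i, j), hij⟩]
  refine ⟨hunit, fun i j k l hij hkl hne => ?_⟩
  rw [F.inner_map_map_of_norm_map_eq hcontr (hnorm i j hij) (hnorm k l hkl)]
  exact hwedge.2 (show (⟨(i, j), hij⟩ : {p : Fin n × Fin n // p.1 < p.2}) ≠ ⟨(k, l), hkl⟩ from
    fun h => hne (congrArg Subtype.val h))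

/-- If a norm-nonincreasing map `F` on 2-vectors induced by `T : W → V` sends every basis
2-vector `ε_i∧ε_j` (i<j) to a unit vector, then the images form an orthonormal set.
The second exterior powers are modelled by inner product spaces `LW`, `LV` together with
wedge maps whose inner products are given by the Gram determinant. -/
theorem stmt_11 (n : ℕ)
    {W V LW LV : Type*}
    [NormedAddCommGroup W] [InnerProductSpace ℝ W]
    [NormedAddCommGroup V] [InnerProductSpace ℝ V]
    [NormedAddCommGroup LW] [InnerProductSpace ℝ LW]
    [NormedAddCommGroup LV] [InnerProductSpace ℝ LV]
    (wW : W →ₗ[ℝ] W →ₗ[ℝ] LW) (wV : V →ₗ[ℝ] V →ₗ[ℝ] LV)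
    (hWgram : ∀ u1 u2 v1 v2 : W, (inner ℝ (wW u1 u2) (wW v1 v2) : ℝ)
      = inner ℝ u1 v1 * inner ℝ u2 v2 - inner ℝ u1 v2 * inner ℝ u2 v1)
    (hVgram : ∀ u1 u2 v1 v2 : V, (inner ℝ (wV u1 u2) (wV v1 v2) : ℝ)
      = inner ℝ u1 v1 * inner ℝ u2 v2 - inner ℝ u1 v2 * inner ℝ u2 v1)
    (T : W →ₗ[ℝ] V) (F : LW →ₗ[ℝ] LV)
    (hTF : ∀ u v : W, F (wW u v) = wV (T u) (T v))
    (hcontr : ∀ ω : LW, ‖F ω‖ ≤ ‖ω‖)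
    (ε : OrthonormalBasis (Fin n) ℝ W)
    (hunit : ∀ i j, i < j → ‖F (wW (ε i) (ε j))‖ = 1) :
    (∀ i j, i < j → ‖F (wW (ε i) (ε j))‖ = 1) ∧
    ∀ i j k l, i < j → k < l → (i, j) ≠ (k, l) →
      (inner ℝ (F (wW (ε i) (ε j))) (F (wW (ε k) (ε l))) : ℝ) = 0 :=
  stmt_11_general n wW hWgram F hcontr ε hunit
end

section
/- Let T : W → V be a linear map between n-dimensional real inner product spaces, n ≥ 3, and suppose the induced map Λ²T is norm-nonincreasing: |Tu ∧ Tv|-type estimate |Λ²T(ω)| ≤ |ω| for all ω ∈ Λ²(W). If there is an orthonormal basis {ε_i} of W such that |Tε_i ∧ Tε_j| = 1 for all i < j, then the vectors {Tε_i} are pairwise orthogonal. -/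
/-!
Write `g_ab = ⟪Tε_a, Tε_b⟫`. A contraction that preserves the norms of two vectors also preserves
their inner product (polarize `‖F (x ± y)‖ ≤ ‖x ± y‖`). Applied to the orthonormal pair
`ε_a ∧ ε_b`, `ε_b ∧ ε_c` this gives `Tε_a ∧ Tε_b ⊥ Tε_b ∧ Tε_c`, i.e. `g_ab g_bc = g_ac g_bb`, for
distinct `a, b, c`. Together with the unit condition `g_aa g_bb - g_ab² = 1` these relations force
`g_bc = g_bc (g_aa g_bb - g_ab²) = 0`; a third index `a` exists because `n ≥ 3`.
-/

open scoped RealInnerProductSpace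

theorem LinearMap.inner_map_map_eq_of_norm_map_eq {E E' : Type*}
    [NormedAddCommGroup E] [InnerProductSpace ℝ E]
    [NormedAddCommGroup E'] [InnerProductSpace ℝ E']
    {F : E →ₗ[ℝ] E'} (hF : ∀ ω, ‖F ω‖ ≤ ‖ω‖) {x y : E}
    (hx : ‖F x‖ = ‖x‖) (hy : ‖F y‖ = ‖y‖) : ⟪F x, F y⟫ = ⟪x, y⟫ := by
  have hsq : ∀ ω, ‖F ω‖ ^ 2 ≤ ‖ω‖ ^ 2 := fun ω =>
    pow_le_pow_left₀ (norm_nonneg _) (hF ω) 2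
  have hadd := hsq (x + y)
  have hsub := hsq (x - y)
  rw [map_add, norm_add_sq_real, norm_add_sq_real, hx, hy] at hadd
  rw [map_sub, norm_sub_sq_real, norm_sub_sq_real, hx, hy] at hsub
  linarith

/-- `w u v` plays the role of `u ∧ v`: the pairing of two wedges is the Gram determinant. -/
def IsWedgePairing {E L : Type*} [NormedAddCommGroup E] [InnerProductSpace ℝ E]
    [NormedAddCommGroup L] [InnerProductSpace ℝ L] (w : E →ₗ[ℝ] E →ₗ[ℝ] L) : Prop :=
  ∀ u₁ u₂ v₁ v₂ : E, ⟪w u₁ u₂, w v₁ v₂⟫ = ⟪u₁, v₁⟫ * ⟪u₂, v₂⟫ - ⟪u₁, v₂⟫ * ⟪u₂, v₁⟫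

namespace IsWedgePairing

variable {E L : Type*} [NormedAddCommGroup E] [InnerProductSpace ℝ E]
  [NormedAddCommGroup L] [InnerProductSpace ℝ L] {w : E →ₗ[ℝ] E →ₗ[ℝ] L}

theorem norm_swap (hw : IsWedgePairing w) (u v : E) : ‖w v u‖ = ‖w u v‖ := by
  rw [norm_eq_sqrt_real_inner, norm_eq_sqrt_real_inner, hw, hw]
  ring_nf

theorem norm_orthonormal {ι : Type*} (hw : IsWedgePairing w) {e : ι → E}
    (he : Orthonormal ℝ e) {a b : ι} (hab : a ≠ b) : ‖w (e a) (e b)‖ = 1 := by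
  classical
  rw [norm_eq_sqrt_real_inner, hw]
  simp [orthonormal_iff_ite.mp he, he.1, hab]

theorem inner_orthonormal_eq_zero {ι : Type*} (hw : IsWedgePairing w) {e : ι → E}
    (he : Orthonormal ℝ e) {a b c : ι} (hab : a ≠ b) (hac : a ≠ c) :
    ⟪w (e a) (e b), w (e b) (e c)⟫ = 0 := by
  classical
  rw [hw]
  simp [orthonormal_iff_ite.mp he, hab, hac]

theorem inner_eq_zero_of_wedge_orthogonal (hw : IsWedgePairing w) {a b c : E}
    (hab : ‖w a b‖ = 1) (h₁ : ⟪w a b, w b c⟫ = 0) (h₂ : ⟪w b a, w a c⟫ = 0) :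
    ⟪b, c⟫ = 0 := by
  have hunit : ⟪w a b, w a b⟫ = 1 := by rw [real_inner_self_eq_norm_sq, hab, one_pow]
  rw [hw] at hunit h₁ h₂
  linear_combination -⟪b, c⟫ * hunit - ⟪b, a⟫ * h₁ - ⟪b, b⟫ * h₂

end IsWedgePairing

theorem stmt_13_general (n : ℕ) (hn : 3 ≤ n)
    {W V LW LV : Type*}
    [NormedAddCommGroup W] [InnerProductSpace ℝ W]
    [NormedAddCommGroup V] [InnerProductSpace ℝ V]
    [NormedAddCommGroup LW] [InnerProductSpace ℝ LW]
    [NormedAddCommGroup LV] [InnerProductSpace ℝ LV]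
    (wW : W →ₗ[ℝ] W →ₗ[ℝ] LW) (wV : V →ₗ[ℝ] V →ₗ[ℝ] LV)
    (hWgram : ∀ u1 u2 v1 v2 : W, (inner ℝ (wW u1 u2) (wW v1 v2) : ℝ)
      = inner ℝ u1 v1 * inner ℝ u2 v2 - inner ℝ u1 v2 * inner ℝ u2 v1)
    (hVgram : ∀ u1 u2 v1 v2 : V, (inner ℝ (wV u1 u2) (wV v1 v2) : ℝ)
      = inner ℝ u1 v1 * inner ℝ u2 v2 - inner ℝ u1 v2 * inner ℝ u2 v1)
    (T : W →ₗ[ℝ] V) (F : LW →ₗ[ℝ] LV)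
    (hTF : ∀ u v : W, F (wW u v) = wV (T u) (T v))
    (hcontr : ∀ ω : LW, ‖F ω‖ ≤ ‖ω‖)
    (ε : OrthonormalBasis (Fin n) ℝ W)
    (hunit : ∀ i j, i < j → ‖wV (T (ε i)) (T (ε j))‖ = 1) :
    ∀ i j, i ≠ j → (inner ℝ (T (ε i)) (T (ε j)) : ℝ) = 0 := by
  have hW : IsWedgePairing wW := hWgram
  have hV : IsWedgePairing wV := hVgram
  have hnorm : ∀ a b, a ≠ b → ‖wV (T (ε a)) (T (ε b))‖ = 1 := by
    intro a b hab
    rcases hab.lt_or_gt with h | h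
    · exact hunit a b h
    · rw [hV.norm_swap, hunit b a h]
  have hpres : ∀ a b, a ≠ b → ‖F (wW (ε a) (ε b))‖ = ‖wW (ε a) (ε b)‖ := fun a b hab => by
    rw [hTF, hnorm a b hab, hW.norm_orthonormal ε.orthonormal hab]
  have horth : ∀ a b c, a ≠ b → a ≠ c → b ≠ c →
      ⟪wV (T (ε a)) (T (ε b)), wV (T (ε b)) (T (ε c))⟫ = 0 := by
    intro a b c hab hac hbc
    rw [← hTF, ← hTF, LinearMap.inner_map_map_eq_of_norm_map_eq hcontr (hpres a b hab)
      (hpres b c hbc), hW.inner_orthonormal_eq_zero ε.orthonormal hab hac]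
  intro i j hij
  obtain ⟨k, hki, hkj⟩ := Fin.exists_ne_and_ne_of_two_lt i j (by omega)
  exact hV.inner_eq_zero_of_wedge_orthogonal (hnorm k i hki) (horth k i j hki hkj hij)
    (horth i k j hki.symm hij hkj)

/-- If `Λ²T` is norm-nonincreasing and `|Tε_i ∧ Tε_j| = 1` for all `i < j` in an
orthonormal basis `{ε_i}` (with `n ≥ 3`), then the vectors `Tε_i` are pairwise
orthogonal.  Exterior squares are modelled by Gram-determinant wedge pairings. -/
theorem stmt_13 (n : ℕ) (hn : 3 ≤ n)
    {W V LW LV : Type*}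
    [NormedAddCommGroup W] [InnerProductSpace ℝ W]
    [NormedAddCommGroup V] [InnerProductSpace ℝ V]
    [NormedAddCommGroup LW] [InnerProductSpace ℝ LW]
    [NormedAddCommGroup LV] [InnerProductSpace ℝ LV]
    (hdimW : Module.finrank ℝ W = n) (hdimV : Module.finrank ℝ V = n)
    (wW : W →ₗ[ℝ] W →ₗ[ℝ] LW) (wV : V →ₗ[ℝ] V →ₗ[ℝ] LV)
    (hWgram : ∀ u1 u2 v1 v2 : W, (inner ℝ (wW u1 u2) (wW v1 v2) : ℝ)
      = inner ℝ u1 v1 * inner ℝ u2 v2 - inner ℝ u1 v2 * inner ℝ u2 v1)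
    (hVgram : ∀ u1 u2 v1 v2 : V, (inner ℝ (wV u1 u2) (wV v1 v2) : ℝ)
      = inner ℝ u1 v1 * inner ℝ u2 v2 - inner ℝ u1 v2 * inner ℝ u2 v1)
    (T : W →ₗ[ℝ] V) (F : LW →ₗ[ℝ] LV)
    (hTF : ∀ u v : W, F (wW u v) = wV (T u) (T v))
    (hcontr : ∀ ω : LW, ‖F ω‖ ≤ ‖ω‖)
    (ε : OrthonormalBasis (Fin n) ℝ W)
    (hunit : ∀ i j, i < j → ‖wV (T (ε i)) (T (ε j))‖ = 1) :
    ∀ i j, i ≠ j → (inner ℝ (T (ε i)) (T (ε j)) : ℝ) = 0 :=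
  stmt_13_general n hn wW wV hWgram hVgram T F hTF hcontr ε hunit
end

section
/- Let T : W → V be a linear map between n-dimensional real inner product spaces with n ≥ 3, such that the vectors {Tε_i} are pairwise orthogonal for some orthonormal basis {ε_i} of W and |Tε_i ∧ Tε_j| = 1 for all i < j. Then |Tε_i| = 1 for every i, and hence T is a linear isometry. -/
/-!
For orthogonal `u, v` the Gram identity gives `|u ∧ v| = |u| |v|`, so the numbers
`a_i = |Tε_i|` satisfy `a_i a_j = 1` for all `i ≠ j`. With a third index `k` at hand,
`a_i² = (a_i a_j)(a_i a_k) / (a_j a_k) = 1`. Hence `T` sends the orthonormal basis `ε`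
to an orthonormal family, so it is an isometry.
-/

open RealInnerProductSpace

theorem norm_wedge_of_inner_eq_zero {V LV : Type*}
    [NormedAddCommGroup V] [InnerProductSpace ℝ V]
    [NormedAddCommGroup LV] [InnerProductSpace ℝ LV]
    (w : V → V → LV) (hgram : ∀ u v : V, ⟪w u v, w u v⟫ = ⟪u, u⟫ * ⟪v, v⟫ - ⟪u, v⟫ * ⟪v, u⟫)
    {u v : V} (huv : ⟪u, v⟫ = 0) : ‖w u v‖ = ‖u‖ * ‖v‖ := by
  have hsq : ‖w u v‖ ^ 2 = (‖u‖ * ‖v‖) ^ 2 := by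
    rw [← real_inner_self_eq_norm_sq, hgram, huv, real_inner_self_eq_norm_sq,
      real_inner_self_eq_norm_sq]
    ring
  exact (pow_left_inj₀ (norm_nonneg _) (by positivity) two_ne_zero).mp hsq

theorem eq_one_of_pairwise_mul_eq_one {ι : Type*} [Fintype ι] (h3 : 3 ≤ Fintype.card ι)
    {f : ι → ℝ} (hf : ∀ i, 0 ≤ f i) (hmul : Pairwise fun i j => f i * f j = 1) (i : ι) :
    f i = 1 := by
  classical
  obtain ⟨j, hj, k, hk, hne⟩ : ∃ j ∈ Finset.univ.erase i, ∃ k ∈ Finset.univ.erase i, j ≠ k := by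
    rw [← Finset.one_lt_card, Finset.card_erase_of_mem (Finset.mem_univ i), Finset.card_univ]
    omega
  have hij := hmul (Finset.ne_of_mem_erase hj).symm
  have hik := hmul (Finset.ne_of_mem_erase hk).symm
  have hjk := hmul hne
  have hsq : f i ^ 2 = 1 := by
    linear_combination f i * f k * hij + hik - f i ^ 2 * hjk
  exact (pow_eq_one_iff_of_nonneg (hf i) two_ne_zero).mp hsq

theorem stmt_14_general (n : ℕ) (hn : 3 ≤ n)
    {W V LV : Type*}
    [NormedAddCommGroup W] [InnerProductSpace ℝ W]
    [NormedAddCommGroup V] [InnerProductSpace ℝ V]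
    [NormedAddCommGroup LV] [InnerProductSpace ℝ LV]
    (wV : V →ₗ[ℝ] V →ₗ[ℝ] LV)
    (hVgram : ∀ u1 u2 v1 v2 : V, (inner ℝ (wV u1 u2) (wV v1 v2) : ℝ)
      = inner ℝ u1 v1 * inner ℝ u2 v2 - inner ℝ u1 v2 * inner ℝ u2 v1)
    (T : W →ₗ[ℝ] V)
    (ε : OrthonormalBasis (Fin n) ℝ W)
    (horth : ∀ i j, i ≠ j → (inner ℝ (T (ε i)) (T (ε j)) : ℝ) = 0)
    (hunit : ∀ i j, i < j → ‖wV (T (ε i)) (T (ε j))‖ = 1) :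
    (∀ i, ‖T (ε i)‖ = 1) ∧ ∀ x : W, ‖T x‖ = ‖x‖ := by
  have hmul : Pairwise fun i j => ‖T (ε i)‖ * ‖T (ε j)‖ = 1 := by
    have hlt : ∀ i j, i < j → ‖T (ε i)‖ * ‖T (ε j)‖ = 1 := fun i j hij => by
      rw [← norm_wedge_of_inner_eq_zero (fun u v => wV u v) (fun u v => hVgram u v u v)
        (horth i j hij.ne), hunit i j hij]
    intro i j hij
    rcases hij.lt_or_gt with h | h
    · exact hlt i j h
    · rw [mul_comm]; exact hlt j i h
  have hnorm : ∀ i, ‖T (ε i)‖ = 1 :=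
    eq_one_of_pairwise_mul_eq_one (by simpa using hn) (fun _ => norm_nonneg _) hmul
  have hon : Orthonormal ℝ (T ∘ ε.toBasis) := by
    simpa [Orthonormal] using ⟨hnorm, horth⟩
  exact ⟨hnorm, (T.isometryOfOrthonormal (by simp [ε.orthonormal]) hon).norm_map⟩

/-- If `{Tε_i}` are pairwise orthogonal for an orthonormal basis `{ε_i}` (with `n ≥ 3`)
and `|Tε_i ∧ Tε_j| = 1` for all `i < j`, then each `|Tε_i| = 1` and `T` is a linear
isometry.  The exterior square of `V` is modelled by a Gram-determinant wedge pairing. -/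
theorem stmt_14 (n : ℕ) (hn : 3 ≤ n)
    {W V LV : Type*}
    [NormedAddCommGroup W] [InnerProductSpace ℝ W]
    [NormedAddCommGroup V] [InnerProductSpace ℝ V]
    [NormedAddCommGroup LV] [InnerProductSpace ℝ LV]
    (hdimW : Module.finrank ℝ W = n) (hdimV : Module.finrank ℝ V = n)
    (wV : V →ₗ[ℝ] V →ₗ[ℝ] LV)
    (hVgram : ∀ u1 u2 v1 v2 : V, (inner ℝ (wV u1 u2) (wV v1 v2) : ℝ)
      = inner ℝ u1 v1 * inner ℝ u2 v2 - inner ℝ u1 v2 * inner ℝ u2 v1)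
    (T : W →ₗ[ℝ] V)
    (ε : OrthonormalBasis (Fin n) ℝ W)
    (horth : ∀ i j, i ≠ j → (inner ℝ (T (ε i)) (T (ε j)) : ℝ) = 0)
    (hunit : ∀ i j, i < j → ‖wV (T (ε i)) (T (ε j))‖ = 1) :
    (∀ i, ‖T (ε i)‖ = 1) ∧ ∀ x : W, ‖T x‖ = ‖x‖ :=
  stmt_14_general n hn wV hVgram T ε horth hunit
end

section
/- Let T : W → V be a linear map between n-dimensional real inner product spaces, n ≥ 3, such that |Λ²T(ω)| ≤ |ω| for every ω ∈ Λ²(W), and suppose there exists an orthonormal basis {ε_i} of W with |Tε_i ∧ Tε_j| = 1 for all 1 ≤ i < j ≤ n. Then T is a linear isometry. -/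
/-!
Write `fᵢ = T εᵢ`. Since `Λ²T` is norm-nonincreasing and preserves the norms of the orthonormal
2-vectors `εᵢ ∧ εₖ` and `εⱼ ∧ εₖ`, it also preserves their orthogonality (apply the contraction
to their sum and difference). In terms of the Gram matrix `aᵢⱼ = ⟪fᵢ, fⱼ⟫` this gives, for distinct
`i, j, k`, the relations `aᵢᵢ aⱼⱼ - aᵢⱼ² = 1` and `aᵢⱼ aₖₖ = aᵢₖ aₖⱼ`; with a third index
available these force `a` to be the identity, so `T` maps an orthonormal basis to an orthonormal
family.
-/

open RealInnerProductSpace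

lemma Fintype.exists_ne_and_ne {ι : Type*} [Fintype ι] [DecidableEq ι]
    (hι : 3 ≤ Fintype.card ι) (j k : ι) : ∃ i, i ≠ j ∧ i ≠ k := by
  have hcard : ({j, k} : Finset ι).card < (Finset.univ : Finset ι).card :=
    Finset.card_le_two.trans_lt hι
  obtain ⟨i, -, hi⟩ := Finset.exists_mem_notMem_of_card_lt_card hcard
  simp only [Finset.mem_insert, Finset.mem_singleton, not_or] at hi
  exact ⟨i, hi⟩

section InnerProductSpace

variable {E F : Type*} [NormedAddCommGroup E] [InnerProductSpace ℝ E]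
  [NormedAddCommGroup F] [InnerProductSpace ℝ F]

lemma inner_eq_zero_of_norm_add_sq_le_of_norm_sub_sq_le {p q : E}
    (hadd : ‖p + q‖ ^ 2 ≤ ‖p‖ ^ 2 + ‖q‖ ^ 2) (hsub : ‖p - q‖ ^ 2 ≤ ‖p‖ ^ 2 + ‖q‖ ^ 2) :
    ⟪p, q⟫ = 0 := by
  rw [norm_add_sq_real] at hadd
  rw [norm_sub_sq_real] at hsub
  linarith

lemma LinearMap.inner_map_map_eq_zero_of_norm_map_le (A : E →ₗ[ℝ] F)
    (hA : ∀ x, ‖A x‖ ≤ ‖x‖) {x y : E} (hxy : ⟪x, y⟫ = 0)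
    (hx : ‖A x‖ = ‖x‖) (hy : ‖A y‖ = ‖y‖) : ⟪A x, A y⟫ = 0 := by
  have hsq : ∀ z, ‖A z‖ ^ 2 ≤ ‖z‖ ^ 2 := fun z => pow_le_pow_left₀ (norm_nonneg _) (hA z) 2
  apply inner_eq_zero_of_norm_add_sq_le_of_norm_sub_sq_le
  · calc ‖A x + A y‖ ^ 2 = ‖A (x + y)‖ ^ 2 := by rw [map_add]
      _ ≤ ‖x + y‖ ^ 2 := hsq _
      _ = ‖A x‖ ^ 2 + ‖A y‖ ^ 2 := by rw [norm_add_sq_real, hxy, hx, hy]; ring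
  · calc ‖A x - A y‖ ^ 2 = ‖A (x - y)‖ ^ 2 := by rw [map_sub]
      _ ≤ ‖x - y‖ ^ 2 := hsq _
      _ = ‖A x‖ ^ 2 + ‖A y‖ ^ 2 := by rw [norm_sub_sq_real, hxy, hx, hy]; ring

end InnerProductSpace

section GramRelations

variable {E ι : Type*} [NormedAddCommGroup E] [InnerProductSpace ℝ E] {f : ι → E}

lemma inner_eq_zero_of_gram_relations
    (hunit : ∀ i j, i ≠ j → ‖f i‖ ^ 2 * ‖f j‖ ^ 2 - ⟪f i, f j⟫ ^ 2 = 1)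
    (hrel : ∀ i j k, i ≠ j → i ≠ k → j ≠ k → ⟪f i, f j⟫ * ‖f k‖ ^ 2 = ⟪f i, f k⟫ * ⟪f k, f j⟫)
    {i j k : ι} (hij : i ≠ j) (hik : i ≠ k) (hjk : j ≠ k) : ⟪f i, f j⟫ = 0 := by
  have hijk := hrel i j k hij hik hjk
  rw [real_inner_comm (f j) (f k)] at hijk
  have hikj := hrel i k j hik hij hjk.symm
  have hprod : ⟪f i, f j⟫ * ⟪f i, f k⟫ = 0 := by
    linear_combination ⟪f i, f k⟫ * ‖f j‖ ^ 2 * hijk + ⟪f i, f k⟫ * ⟪f j, f k⟫ * hikj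
      - ⟪f i, f j⟫ * ⟪f i, f k⟫ * hunit j k hjk
  have hk : ‖f k‖ ^ 2 ≠ 0 := by
    intro h0
    have := hunit k i hik.symm
    rw [h0] at this
    nlinarith [sq_nonneg ⟪f k, f i⟫]
  have hsq : ⟪f i, f j⟫ ^ 2 * ‖f k‖ ^ 2 = 0 := by
    linear_combination ⟪f i, f j⟫ * hijk + ⟪f j, f k⟫ * hprod
  simpa [hk] using hsq

lemma norm_eq_one_of_gram_relations (horth : Pairwise fun i j => ⟪f i, f j⟫ = 0)
    (hunit : ∀ i j, i ≠ j → ‖f i‖ ^ 2 * ‖f j‖ ^ 2 - ⟪f i, f j⟫ ^ 2 = 1)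
    {i j k : ι} (hij : i ≠ j) (hik : i ≠ k) (hjk : j ≠ k) : ‖f i‖ = 1 := by
  have hij' := hunit i j hij
  have hik' := hunit i k hik
  have hjk' := hunit j k hjk
  rw [horth hij] at hij'
  rw [horth hik] at hik'
  rw [horth hjk] at hjk'
  have h4 : (‖f i‖ ^ 2) ^ 2 = 1 := by
    linear_combination ‖f i‖ ^ 2 * ‖f k‖ ^ 2 * hij' + hik' - (‖f i‖ ^ 2) ^ 2 * hjk'
  have h2 : ‖f i‖ ^ 2 = 1 := (pow_eq_one_iff_of_nonneg (by positivity) two_ne_zero).mp h4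
  exact (pow_eq_one_iff_of_nonneg (norm_nonneg _) two_ne_zero).mp h2

end GramRelations

/-- `w` behaves like the wedge product `u ∧ v` for the Gram-determinant inner product on `Λ²`. -/
def IsWedge {E L : Type*} [NormedAddCommGroup E] [InnerProductSpace ℝ E]
    [NormedAddCommGroup L] [InnerProductSpace ℝ L] (w : E →ₗ[ℝ] E →ₗ[ℝ] L) : Prop :=
  ∀ u₁ u₂ v₁ v₂ : E, ⟪w u₁ u₂, w v₁ v₂⟫ = ⟪u₁, v₁⟫ * ⟪u₂, v₂⟫ - ⟪u₁, v₂⟫ * ⟪u₂, v₁⟫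

namespace IsWedge

variable {E L ι : Type*} [NormedAddCommGroup E] [InnerProductSpace ℝ E]
  [NormedAddCommGroup L] [InnerProductSpace ℝ L] {w : E →ₗ[ℝ] E →ₗ[ℝ] L}

lemma norm_sq_apply (hw : IsWedge w) (u v : E) :
    ‖w u v‖ ^ 2 = ‖u‖ ^ 2 * ‖v‖ ^ 2 - ⟪u, v⟫ ^ 2 := by
  rw [← real_inner_self_eq_norm_sq, hw, real_inner_self_eq_norm_sq, real_inner_self_eq_norm_sq,
    real_inner_comm v u]
  ring

lemma norm_apply_comm (hw : IsWedge w) (u v : E) : ‖w u v‖ = ‖w v u‖ := by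
  rw [← pow_left_inj₀ (norm_nonneg _) (norm_nonneg _) two_ne_zero, hw.norm_sq_apply,
    hw.norm_sq_apply, real_inner_comm]
  ring

lemma norm_apply_of_orthonormal (hw : IsWedge w) {e : ι → E} (he : Orthonormal ℝ e) {i j : ι}
    (hij : i ≠ j) : ‖w (e i) (e j)‖ = 1 := by
  have h := hw.norm_sq_apply (e i) (e j)
  rw [he.1 i, he.1 j, he.2 hij] at h
  exact (pow_eq_one_iff_of_nonneg (norm_nonneg _) two_ne_zero).mp (by simpa using h)

lemma inner_apply_of_orthonormal (hw : IsWedge w) {e : ι → E} (he : Orthonormal ℝ e) {i j k : ι}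
    (hij : i ≠ j) (hik : i ≠ k) : ⟪w (e i) (e k), w (e j) (e k)⟫ = 0 := by
  rw [hw, he.2 hij, he.2 hik]
  ring

lemma orthonormal_of_wedge [Fintype ι] (hι : 3 ≤ Fintype.card ι) (hw : IsWedge w) {f : ι → E}
    (hunit : ∀ i j, i ≠ j → ‖w (f i) (f j)‖ = 1)
    (horth : ∀ i j k, i ≠ j → i ≠ k → j ≠ k → ⟪w (f i) (f k), w (f j) (f k)⟫ = 0) :
    Orthonormal ℝ f := by
  classical
  have hunit' : ∀ i j, i ≠ j → ‖f i‖ ^ 2 * ‖f j‖ ^ 2 - ⟪f i, f j⟫ ^ 2 = 1 := fun i j hij => by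
    rw [← hw.norm_sq_apply, hunit i j hij, one_pow]
  have hrel : ∀ i j k, i ≠ j → i ≠ k → j ≠ k →
      ⟪f i, f j⟫ * ‖f k‖ ^ 2 = ⟪f i, f k⟫ * ⟪f k, f j⟫ := fun i j k hij hik hjk => by
    have h := horth i j k hij hik hjk
    rw [hw, real_inner_self_eq_norm_sq] at h
    linarith
  have hpair : Pairwise fun i j => ⟪f i, f j⟫ = 0 := fun i j hij => by
    obtain ⟨k, hki, hkj⟩ := Fintype.exists_ne_and_ne hι i j
    exact inner_eq_zero_of_gram_relations hunit' hrel hij hki.symm hkj.symm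
  refine ⟨fun i => ?_, hpair⟩
  obtain ⟨j, hji, -⟩ := Fintype.exists_ne_and_ne hι i i
  obtain ⟨k, hki, hkj⟩ := Fintype.exists_ne_and_ne hι i j
  exact norm_eq_one_of_gram_relations hpair hunit' hji.symm hki.symm hkj.symm

end IsWedge

theorem stmt_15_general (n : ℕ) (hn : 3 ≤ n)
    {W V LW LV : Type*}
    [NormedAddCommGroup W] [InnerProductSpace ℝ W]
    [NormedAddCommGroup V] [InnerProductSpace ℝ V]
    [NormedAddCommGroup LW] [InnerProductSpace ℝ LW]
    [NormedAddCommGroup LV] [InnerProductSpace ℝ LV]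
    (wW : W →ₗ[ℝ] W →ₗ[ℝ] LW) (wV : V →ₗ[ℝ] V →ₗ[ℝ] LV)
    (hWgram : ∀ u1 u2 v1 v2 : W, (inner ℝ (wW u1 u2) (wW v1 v2) : ℝ)
      = inner ℝ u1 v1 * inner ℝ u2 v2 - inner ℝ u1 v2 * inner ℝ u2 v1)
    (hVgram : ∀ u1 u2 v1 v2 : V, (inner ℝ (wV u1 u2) (wV v1 v2) : ℝ)
      = inner ℝ u1 v1 * inner ℝ u2 v2 - inner ℝ u1 v2 * inner ℝ u2 v1)
    (T : W →ₗ[ℝ] V) (F : LW →ₗ[ℝ] LV)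
    (hTF : ∀ u v : W, F (wW u v) = wV (T u) (T v))
    (hcontr : ∀ ω : LW, ‖F ω‖ ≤ ‖ω‖)
    (ε : OrthonormalBasis (Fin n) ℝ W)
    (hunit : ∀ i j, i < j → ‖wV (T (ε i)) (T (ε j))‖ = 1) :
    ∀ x : W, ‖T x‖ = ‖x‖ := by
  have hW : IsWedge wW := hWgram
  have hV : IsWedge wV := hVgram
  have hunit' : ∀ i j, i ≠ j → ‖wV (T (ε i)) (T (ε j))‖ = 1 := fun i j hij => by
    rcases hij.lt_or_gt with h | h
    · exact hunit i j h
    · rw [hV.norm_apply_comm]; exact hunit j i h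
  have hpreserved : ∀ i j, i ≠ j → ‖F (wW (ε i) (ε j))‖ = ‖wW (ε i) (ε j)‖ := fun i j hij => by
    rw [hTF, hunit' i j hij, hW.norm_apply_of_orthonormal ε.orthonormal hij]
  have horth : ∀ i j k, i ≠ j → i ≠ k → j ≠ k →
      ⟪wV (T (ε i)) (T (ε k)), wV (T (ε j)) (T (ε k))⟫ = 0 := fun i j k hij hik hjk => by
    rw [← hTF, ← hTF]
    exact F.inner_map_map_eq_zero_of_norm_map_le hcontr
      (hW.inner_apply_of_orthonormal ε.orthonormal hij hik) (hpreserved i k hik)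
      (hpreserved j k hjk)
  have hTε : Orthonormal ℝ (T ∘ ε) := hV.orthonormal_of_wedge (by simpa using hn) hunit' horth
  exact (T.isometryOfOrthonormal (v := ε.toBasis) ε.orthonormal hTε).norm_map

/-- Rigidity core of Llarull's theorem: a linear map `T` between `n`-dimensional inner
product spaces (`n ≥ 3`) whose induced map on 2-vectors is norm-nonincreasing and sends
every basis 2-vector `ε_i∧ε_j` (i<j) to a unit vector is a linear isometry. -/
theorem stmt_15 (n : ℕ) (hn : 3 ≤ n)
    {W V LW LV : Type*}
    [NormedAddCommGroup W] [InnerProductSpace ℝ W]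
    [NormedAddCommGroup V] [InnerProductSpace ℝ V]
    [NormedAddCommGroup LW] [InnerProductSpace ℝ LW]
    [NormedAddCommGroup LV] [InnerProductSpace ℝ LV]
    (hdimW : Module.finrank ℝ W = n) (hdimV : Module.finrank ℝ V = n)
    (wW : W →ₗ[ℝ] W →ₗ[ℝ] LW) (wV : V →ₗ[ℝ] V →ₗ[ℝ] LV)
    (hWgram : ∀ u1 u2 v1 v2 : W, (inner ℝ (wW u1 u2) (wW v1 v2) : ℝ)
      = inner ℝ u1 v1 * inner ℝ u2 v2 - inner ℝ u1 v2 * inner ℝ u2 v1)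
    (hVgram : ∀ u1 u2 v1 v2 : V, (inner ℝ (wV u1 u2) (wV v1 v2) : ℝ)
      = inner ℝ u1 v1 * inner ℝ u2 v2 - inner ℝ u1 v2 * inner ℝ u2 v1)
    (T : W →ₗ[ℝ] V) (F : LW →ₗ[ℝ] LV)
    (hTF : ∀ u v : W, F (wW u v) = wV (T u) (T v))
    (hcontr : ∀ ω : LW, ‖F ω‖ ≤ ‖ω‖)
    (ε : OrthonormalBasis (Fin n) ℝ W)
    (hunit : ∀ i j, i < j → ‖wV (T (ε i)) (T (ε j))‖ = 1) :
    ∀ x : W, ‖T x‖ = ‖x‖ :=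
  stmt_15_general n hn wW wV hWgram hVgram T F hTF hcontr ε hunit
end
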